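/- arXiv:1608.00124 — 4 statements merged into one kernel-verified Lean document; each statement's English description precedes it below -/
import Mathlib

section
/- Let H be a Hermitian operator on a finite-dimensional Hilbert space with eigenvalues ε_1 ≤ ε_2 ≤ ... ≤ ε_d (with orthonormal eigenvectors |ε_k⟩), and let ρ be a density operator with eigenvalues r_1 ≥ r_2 ≥ ... ≥ r_d (with orthonormal eigenvectors |r_k⟩). Then the ergotropy W(ρ) = Σ_{j,k} r_k ε_j (|⟨ε_j|r_k⟩|² − δ_{jk}) is nonnegative. -/
/-!
The matrix `D j k = ‖⟨e j, v k⟩‖²` of overlaps between two orthonormal bases is doubly stochastic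
(Parseval's identity in either basis). By Birkhoff's theorem it is a convex combination of
permutation matrices, and the linear functional `D ↦ ∑ j k, r k * ε j * D j k` is at least the
passive energy `∑ k, r k * ε k` at every permutation matrix by the rearrangement inequality,
since `r` and `ε` are oppositely ordered.
-/

open Matrix Kronecker BigOperators ComplexOrder

noncomputable section

/-- Partial trace over the second (ancilla) factor. -/
def ptrA {d m : ℕ} (ρ : Matrix (Fin d × Fin m) (Fin d × Fin m) ℂ) :
    Matrix (Fin d) (Fin d) ℂ := fun i j => ∑ a, ρ (i, a) (j, a)

/-- Partial trace over the first (system) factor. -/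
def ptrS {d m : ℕ} (ρ : Matrix (Fin d × Fin m) (Fin d × Fin m) ℂ) :
    Matrix (Fin m) (Fin m) ℂ := fun x y => ∑ i, ρ (i, x) (i, y)

/-- Probability of outcome corresponding to ancilla projector `P`. -/
def outcomeProb {d m : ℕ} (ρ : Matrix (Fin d × Fin m) (Fin d × Fin m) ℂ)
    (P : Matrix (Fin m) (Fin m) ℂ) : ℝ :=
  ((((1 : Matrix (Fin d) (Fin d) ℂ)) ⊗ₖ P) * ρ).trace.re

/-- Normalized conditional state of the system after ancilla outcome `P`. -/
def condState {d m : ℕ} (ρ : Matrix (Fin d × Fin m) (Fin d × Fin m) ℂ)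
    (P : Matrix (Fin m) (Fin m) ℂ) : Matrix (Fin d) (Fin d) ℂ :=
  (outcomeProb ρ P)⁻¹ •
    ptrA (((1 : Matrix (Fin d) (Fin d) ℂ) ⊗ₖ P) * ρ *
      ((1 : Matrix (Fin d) (Fin d) ℂ) ⊗ₖ P))

/-- Passive energy `∑ₖ rₖ εₖ`: decreasing eigenvalues of `σ` paired with the
increasingly ordered energies `ε`. -/
def passiveEnergy {d : ℕ} (ε : Fin d → ℝ) (σ : Matrix (Fin d) (Fin d) ℂ) : ℝ :=
  if h : σ.IsHermitian then
    ∑ k, (h.eigenvalues ∘ (Tuple.sort h.eigenvalues)) k.rev * ε k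
  else 0

/-- The daemonic gain `δW`: supremum over complete projective ancilla
measurements of `W_{Π} - W`. -/
def deltaW {d m : ℕ} (ε : Fin d → ℝ)
    (ρ : Matrix (Fin d × Fin m) (Fin d × Fin m) ℂ) : ℝ :=
  sSup {g : ℝ | ∃ (n : ℕ) (P : Fin n → Matrix (Fin m) (Fin m) ℂ),
    (∀ a, (P a).IsHermitian) ∧ (∀ a b, P a * P b = if a = b then P a else 0) ∧
    (∑ a, P a = 1) ∧
    g = passiveEnergy ε (ptrA ρ) -
      ∑ a, outcomeProb ρ (P a) * passiveEnergy ε (condState ρ (P a))}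

end

section Rearrangement

variable {R ι : Type*} [Field R] [LinearOrder R] [IsStrictOrderedRing R]
  [Fintype ι] [DecidableEq ι]

theorem Antivary.sum_mul_le_sum_sum_mul_of_mem_doublyStochastic {f g : ι → R}
    (hfg : Antivary f g) {M : Matrix ι ι R} (hM : M ∈ doublyStochastic R ι) :
    ∑ i, f i * g i ≤ ∑ j, ∑ k, f k * g j * M j k := by
  have hlin : IsLinearMap R fun M : Matrix ι ι R ↦ ∑ j, ∑ k, f k * g j * M j k :=
    ⟨fun A B ↦ by simp only [Matrix.add_apply, mul_add, Finset.sum_add_distrib],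
      fun c A ↦ by simp only [Matrix.smul_apply, smul_eq_mul, Finset.mul_sum, mul_left_comm c]⟩
  have hM' : M ∈ convexHull R {σ.permMatrix R | σ : Equiv.Perm ι} := by
    rwa [← doublyStochastic_eq_convexHull_permMatrix]
  refine convexHull_min ?_ (convex_halfSpace_ge hlin _) hM'
  rintro _ ⟨σ, rfl⟩
  -- at `σ.permMatrix R` the functional is `∑ j, f (σ j) * g j`
  simpa only [Set.mem_ofPred_eq, PEquiv.toMatrix_apply, Equiv.toPEquiv_apply, Option.mem_def,
    Option.some.injEq, mul_ite, mul_one, mul_zero, Finset.sum_ite_eq, Finset.mem_univ,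
    if_true] using hfg.sum_mul_le_sum_comp_perm_mul

end Rearrangement

section OrthonormalVectors

variable {𝕜 ι : Type*} [RCLike 𝕜] [Fintype ι]

theorem star_dotProduct_eq_inner (x y : ι → 𝕜) :
    star x ⬝ᵥ y = inner 𝕜 (WithLp.toLp 2 x) (WithLp.toLp 2 y) := by
  rw [EuclideanSpace.inner_toLp_toLp, dotProduct_comm]

theorem orthonormal_toLp_of_star_dotProduct [DecidableEq ι] {v : ι → ι → 𝕜}
    (hv : ∀ j k, star (v j) ⬝ᵥ v k = if j = k then 1 else 0) :
    Orthonormal 𝕜 (fun k ↦ WithLp.toLp 2 (v k)) := by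
  rw [orthonormal_iff_ite]
  intro j k
  rw [← star_dotProduct_eq_inner, hv]

noncomputable def OrthonormalBasis.ofStarDotProduct [DecidableEq ι] {v : ι → ι → 𝕜}
    (hv : ∀ j k, star (v j) ⬝ᵥ v k = if j = k then 1 else 0) :
    OrthonormalBasis ι 𝕜 (EuclideanSpace 𝕜 ι) :=
  .mk (orthonormal_toLp_of_star_dotProduct hv)
    ((orthonormal_toLp_of_star_dotProduct hv).linearIndependent.span_eq_top_of_card_eq_finrank'
      finrank_euclideanSpace.symm).ge

@[simp]
theorem OrthonormalBasis.coe_ofStarDotProduct [DecidableEq ι] {v : ι → ι → 𝕜}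
    (hv : ∀ j k, star (v j) ⬝ᵥ v k = if j = k then 1 else 0) :
    ⇑(OrthonormalBasis.ofStarDotProduct hv) = fun k ↦ WithLp.toLp 2 (v k) :=
  OrthonormalBasis.coe_mk _ _

theorem of_norm_star_dotProduct_sq_mem_doublyStochastic [DecidableEq ι] {e v : ι → ι → 𝕜}
    (he : ∀ j k, star (e j) ⬝ᵥ e k = if j = k then 1 else 0)
    (hv : ∀ j k, star (v j) ⬝ᵥ v k = if j = k then 1 else 0) :
    Matrix.of (fun j k ↦ ‖star (e j) ⬝ᵥ v k‖ ^ 2) ∈ doublyStochastic ℝ ι := by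
  refine mem_doublyStochastic_iff_sum.2 ⟨fun _ _ ↦ sq_nonneg _, fun j ↦ ?_, fun k ↦ ?_⟩
  · simpa [star_dotProduct_eq_inner, (orthonormal_toLp_of_star_dotProduct he).1 j] using
      (OrthonormalBasis.ofStarDotProduct hv).sum_sq_norm_inner_left (WithLp.toLp 2 (e j))
  · simpa [star_dotProduct_eq_inner, (orthonormal_toLp_of_star_dotProduct hv).1 k] using
      (OrthonormalBasis.ofStarDotProduct he).sum_sq_norm_inner_right (WithLp.toLp 2 (v k))

end OrthonormalVectors

theorem ergotropy_nonneg_general {d : ℕ} (ε r : Fin d → ℝ)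
    (hε : Monotone ε) (hr : Antitone r)
    (e v : Fin d → Fin d → ℂ)
    (he : ∀ j k, star (e j) ⬝ᵥ e k = if j = k then (1 : ℂ) else 0)
    (hv : ∀ j k, star (v j) ⬝ᵥ v k = if j = k then (1 : ℂ) else 0) :
    0 ≤ ∑ j, ∑ k, r k * ε j *
      (‖star (e j) ⬝ᵥ v k‖ ^ 2 - if j = k then 1 else 0) := by
  have passive_le := (hr.antivary hε).sum_mul_le_sum_sum_mul_of_mem_doublyStochastic
    (of_norm_star_dotProduct_sq_mem_doublyStochastic he hv)
  simp only [mul_sub, Finset.sum_sub_distrib, mul_ite, mul_one, mul_zero, Finset.sum_ite_eq,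
    Finset.mem_univ, if_true, sub_nonneg]
  simpa only [of_apply] using passive_le

/-- the ergotropy W(ρ) = ∑_{j,k} rₖ εⱼ (|⟨εⱼ|rₖ⟩|² − δⱼₖ) is
nonnegative, where ε are the increasingly ordered eigenvalues of a Hermitian H
with orthonormal eigenvectors e, and r are the decreasingly ordered eigenvalues
of a density operator with orthonormal eigenvectors v. -/
theorem ergotropy_nonneg {d : ℕ} (ε r : Fin d → ℝ)
    (hε : Monotone ε) (hr : Antitone r)
    (hr0 : ∀ k, 0 ≤ r k) (hr1 : ∑ k, r k = 1)
    (e v : Fin d → Fin d → ℂ)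
    (he : ∀ j k, star (e j) ⬝ᵥ e k = if j = k then (1 : ℂ) else 0)
    (hv : ∀ j k, star (v j) ⬝ᵥ v k = if j = k then (1 : ℂ) else 0) :
    0 ≤ ∑ j, ∑ k, r k * ε j *
      (‖star (e j) ⬝ᵥ v k‖ ^ 2 - if j = k then 1 else 0) :=
  ergotropy_nonneg_general ε r hε hr e v he hv
end

section
/- Concavity of the passive energy: for a Hermitian H on ℂ^d with increasingly ordered eigenvalues ε_1 ≤ ... ≤ ε_d, define E_pass(ρ) = Σ_k r_k(ρ) ε_k, where r_k(ρ) are the eigenvalues of the density operator ρ in decreasing order. Then for any probability weights p_a and density operators ρ_a, E_pass(Σ_a p_a ρ_a) ≥ Σ_a p_a E_pass(ρ_a). -/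
open Matrix Kronecker BigOperators ComplexOrder

/-!
The passive energy of `A` is the minimum over unitaries `V` of the linear functional
`A ↦ ∑ₖ ε_{rev k} Re (V* A V)ₖₖ`, attained when the columns of `V` are eigenvectors of `A` in
increasing order of eigenvalue; a minimum of linear functionals is concave. For the lower bound,
write `A = U D U*`: the diagonal of `V* A V` is the spectrum of `A` mixed by the doubly stochastic
matrix `|(V* U)ₖₗ|²`, and by Birkhoff's theorem and the rearrangement inequality no such mixing
can lower the oppositely ordered pairing with `ε ∘ rev`.
-/

section DoublyStochastic

variable {n 𝕜 : Type*} [Fintype n] [DecidableEq n] [RCLike 𝕜]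

theorem Antivary.sum_mul_le_dotProduct_mulVec {f g : n → ℝ} (hfg : Antivary f g)
    {M : Matrix n n ℝ} (hM : M ∈ doublyStochastic ℝ n) :
    ∑ i, f i * g i ≤ f ⬝ᵥ (M *ᵥ g) := by
  rw [← SetLike.mem_coe, doublyStochastic_eq_convexHull_permMatrix] at hM
  have hlin : IsLinearMap ℝ fun N : Matrix n n ℝ => f ⬝ᵥ (N *ᵥ g) :=
    ⟨fun N N' => by simp only [add_mulVec, dotProduct_add],
      fun c N => by simp only [smul_mulVec, dotProduct_smul]⟩
  refine convexHull_min ?_ (convex_halfSpace_ge hlin _) hM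
  rintro _ ⟨σ, rfl⟩
  simpa [permMatrix_mulVec, dotProduct] using hfg.sum_mul_le_sum_mul_comp_perm (σ := σ)

theorem Matrix.of_norm_sq_mem_doublyStochastic_of_mem_unitaryGroup {U : Matrix n n 𝕜}
    (hU : U ∈ unitaryGroup n 𝕜) :
    (of fun i j => ‖U i j‖ ^ 2 : Matrix n n ℝ) ∈ doublyStochastic ℝ n := by
  have hrow : ∀ i, ∑ j, ‖U i j‖ ^ 2 = 1 := fun i => by
    have := congr_fun₂ (mem_unitaryGroup_iff.mp hU) i i
    simp only [mul_apply, star_apply, RCLike.star_def, RCLike.mul_conj, one_apply_eq] at this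
    exact_mod_cast this
  have hcol : ∀ j, ∑ i, ‖U i j‖ ^ 2 = 1 := fun j => by
    have := congr_fun₂ (mem_unitaryGroup_iff'.mp hU) j j
    simp only [mul_apply, star_apply, RCLike.star_def, RCLike.conj_mul, one_apply_eq] at this
    exact_mod_cast this
  refine ⟨fun i j => sq_nonneg _, ?_, ?_⟩
  · ext i; simpa [mulVec, dotProduct] using hrow i
  · ext j; simpa [vecMul, dotProduct] using hcol j

theorem Matrix.re_mul_diagonal_mul_star_apply_self (W : Matrix n n 𝕜) (μ : n → ℝ) (k : n) :
    RCLike.re ((W * diagonal (RCLike.ofReal ∘ μ) * star W : Matrix n n 𝕜) k k) =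
      ((of fun i j => ‖W i j‖ ^ 2 : Matrix n n ℝ) *ᵥ μ) k := by
  simp only [mul_apply, diagonal_apply, star_apply, Function.comp_apply, mul_ite, mul_zero,
    Finset.sum_ite_eq', Finset.mem_univ, if_true, mulVec, dotProduct, of_apply, map_sum]
  refine Finset.sum_congr rfl fun l _ => ?_
  rw [mul_right_comm, RCLike.star_def, RCLike.mul_conj]
  norm_cast

end DoublyStochastic

namespace Matrix.IsHermitian

variable {𝕜 : Type*} [RCLike 𝕜] {d : ℕ} {A : Matrix (Fin d) (Fin d) 𝕜} (hA : A.IsHermitian)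

theorem sum_mul_sort_eigenvalues_le {η : Fin d → ℝ} (hη : Antitone η)
    {V : Matrix (Fin d) (Fin d) 𝕜} (hV : V ∈ unitaryGroup (Fin d) 𝕜) :
    ∑ k, η k * (hA.eigenvalues ∘ Tuple.sort hA.eigenvalues) k ≤
      ∑ k, η k * RCLike.re ((star V * A * V) k k) := by
  set σ := Tuple.sort hA.eigenvalues
  set W := star V * (hA.eigenvectorUnitary : Matrix (Fin d) (Fin d) 𝕜)
  have hW : W ∈ unitaryGroup (Fin d) 𝕜 :=
    Submonoid.mul_mem _ (Unitary.star_mem hV) hA.eigenvectorUnitary.2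
  have hconj : star V * A * V = W * diagonal (RCLike.ofReal ∘ hA.eigenvalues) * star W := by
    conv_lhs => rw [hA.spectral_theorem]
    simp [W, star_mul, mul_assoc]
  have hunsort : σ⁻¹.permMatrix ℝ *ᵥ (hA.eigenvalues ∘ σ) = hA.eigenvalues := by
    ext; simp [permMatrix_mulVec]
  calc ∑ k, η k * (hA.eigenvalues ∘ σ) k
      ≤ η ⬝ᵥ (((of fun i j => ‖W i j‖ ^ 2 : Matrix (Fin d) (Fin d) ℝ) * σ⁻¹.permMatrix ℝ) *ᵥ
          (hA.eigenvalues ∘ σ)) :=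
        (hη.antivary (Tuple.monotone_sort _)).sum_mul_le_dotProduct_mulVec
          (Submonoid.mul_mem _ (of_norm_sq_mem_doublyStochastic_of_mem_unitaryGroup hW)
            permMatrix_mem_doublyStochastic)
    _ = ∑ k, η k * RCLike.re ((star V * A * V) k k) := by
      simp only [hconj, re_mul_diagonal_mul_star_apply_self, ← mulVec_mulVec, hunsort,
        dotProduct]

theorem exists_unitary_star_mul_mul_eq_diagonal_sort :
    ∃ V ∈ unitaryGroup (Fin d) 𝕜,
      star V * A * V = diagonal (RCLike.ofReal ∘ hA.eigenvalues ∘ Tuple.sort hA.eigenvalues) := by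
  set σ := Tuple.sort hA.eigenvalues
  set U := (hA.eigenvectorUnitary : Matrix (Fin d) (Fin d) 𝕜)
  have hstar : star (U.submatrix id σ) = (star U).submatrix σ id := conjTranspose_submatrix ..
  refine ⟨U.submatrix id σ, ?_, ?_⟩
  · rw [mem_unitaryGroup_iff', hstar, ← submatrix_mul _ _ _ _ _ Function.bijective_id,
      Unitary.coe_star_mul_self, submatrix_one_equiv]
  · have hdiag := hA.conjStarAlgAut_star_eigenvectorUnitary
    rw [Unitary.conjStarAlgAut_star_apply] at hdiag
    calc star (U.submatrix id σ) * A * U.submatrix id σ = (star U * A * U).submatrix σ σ := by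
          rw [hstar, submatrix_mul _ _ _ id _ Function.bijective_id,
            submatrix_mul _ _ _ id _ Function.bijective_id, submatrix_id_id]
      _ = _ := by rw [hdiag, submatrix_diagonal_equiv]; rfl

end Matrix.IsHermitian

theorem passiveEnergy_eq_of_isHermitian {d : ℕ} (ε : Fin d → ℝ) {σ : Matrix (Fin d) (Fin d) ℂ}
    (hσ : σ.IsHermitian) :
    passiveEnergy ε σ = ∑ k, ε k.rev * (hσ.eigenvalues ∘ Tuple.sort hσ.eigenvalues) k := by
  rw [passiveEnergy, dif_pos hσ]
  exact Fintype.sum_equiv Fin.revPerm _ _ fun k => by simp [mul_comm]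

theorem passiveEnergy_concave_general {d n : ℕ} (ε : Fin d → ℝ) (hε : Monotone ε)
    (p : Fin n → ℝ) (hp : ∀ a, 0 ≤ p a)
    (ρs : Fin n → Matrix (Fin d) (Fin d) ℂ)
    (hpsd : ∀ a, (ρs a).PosSemidef) :
    ∑ a, p a * passiveEnergy ε (ρs a) ≤ passiveEnergy ε (∑ a, p a • ρs a) := by
  have hη : Antitone fun k : Fin d => ε k.rev := hε.comp_antitone Fin.rev_anti
  have hB : (∑ a, p a • ρs a).IsHermitian := (isSelfAdjoint_sum _ fun a _ =>
    ((hpsd a).1.smul (IsSelfAdjoint.all (p a))).isSelfAdjoint).isHermitian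
  obtain ⟨V, hV, hVB⟩ := hB.exists_unitary_star_mul_mul_eq_diagonal_sort
  calc ∑ a, p a * passiveEnergy ε (ρs a)
      ≤ ∑ a, p a * ∑ k, ε k.rev * ((star V * ρs a * V) k k).re := by
        refine Finset.sum_le_sum fun a _ => mul_le_mul_of_nonneg_left ?_ (hp a)
        rw [passiveEnergy_eq_of_isHermitian ε (hpsd a).1]
        exact (hpsd a).1.sum_mul_sort_eigenvalues_le hη hV
    _ = ∑ k, ε k.rev * ((star V * (∑ a, p a • ρs a) * V) k k).re := by
        simp only [Matrix.sum_mul, Matrix.mul_smul, Matrix.smul_mul, Matrix.sum_apply,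
          Matrix.smul_apply, Complex.re_sum, Complex.real_smul, Complex.re_ofReal_mul,
          Finset.mul_sum]
        rw [Finset.sum_comm]
        simp only [mul_left_comm]
    _ = passiveEnergy ε (∑ a, p a • ρs a) := by
        simp [hVB, passiveEnergy_eq_of_isHermitian ε hB]

/-- concavity of the passive energy: for probability weights pₐ
and density operators ρₐ, E_pass(∑ₐ pₐ ρₐ) ≥ ∑ₐ pₐ E_pass(ρₐ), where E_pass
pairs the decreasingly ordered eigenvalues with the increasingly ordered
energies ε. -/
theorem passiveEnergy_concave {d n : ℕ} (ε : Fin d → ℝ) (hε : Monotone ε)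
    (p : Fin n → ℝ) (hp : ∀ a, 0 ≤ p a) (hp1 : ∑ a, p a = 1)
    (ρs : Fin n → Matrix (Fin d) (Fin d) ℂ)
    (hpsd : ∀ a, (ρs a).PosSemidef) (htr : ∀ a, (ρs a).trace = 1) :
    ∑ a, p a * passiveEnergy ε (ρs a) ≤ passiveEnergy ε (∑ a, p a • ρs a) :=
  passiveEnergy_concave_general ε hε p hp ρs hpsd
end

section
/- Daemonic ergotropy exceeds ergotropy (Lemma 1): with ρ_SA a bipartite density operator on ℂ^d ⊗ ℂ^m, {Π_a} orthogonal projectors on the ancilla summing to identity, p_a = Tr[(1⊗Π_a)ρ_SA], ρ_{S|a} the conditional states, and H = Σ_k ε_k |ε_k⟩⟨ε_k| with ε_1 ≤ ... ≤ ε_d, one has W_{{Π_a}} := Tr[ρ_S H] − Σ_a p_a Σ_k r^a_k ε_k ≥ W(ρ_S) := Tr[ρ_S H] − Σ_k r_k ε_k, where r^a_k and r_k are the decreasingly ordered eigenvalues of ρ_{S|a} and ρ_S = Σ_a p_a ρ_{S|a} respectively. -/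
open Matrix Kronecker BigOperators ComplexOrder

/-!
Write `E(σ) = ∑ₖ r↓ₖ εₖ` for the passive energy of a Hermitian `σ`. It is the minimum over
unitaries `U` of `∑ₖ (Uᴴ σ U)ₖₖ εₖ`: the diagonal of `Uᴴ σ U` is `D r` for the doubly stochastic
matrix `Dₖⱼ = |(Uᴴ V)ₖⱼ|²` (`V` an eigenbasis of `σ`), so by Birkhoff's theorem and the
rearrangement inequality `∑ₖ (D r)ₖ εₖ ≥ ∑ₖ r↓ₖ εₖ`, with equality for a suitably permuted
eigenbasis. As a minimum of linear functionals `E` is concave, and `ρ_S = ∑ₐ pₐ ρ_{S|a}`, so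
`∑ₐ pₐ E(ρ_{S|a}) ≤ E(ρ_S)`; the terms `Tr[ρ_S H]` cancel.
-/

noncomputable def decreasingRearrangement {d : ℕ} (lam : Fin d → ℝ) (k : Fin d) : ℝ :=
  (lam ∘ Tuple.sort lam) k.rev

theorem sum_decreasingRearrangement_mul_le_sum_comp_perm_mul {d : ℕ} (lam : Fin d → ℝ)
    {ε : Fin d → ℝ} (hε : Monotone ε) (π : Equiv.Perm (Fin d)) :
    ∑ k, decreasingRearrangement lam k * ε k ≤ ∑ k, lam (π k) * ε k := by
  have hanti : Antitone (decreasingRearrangement lam) :=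
    (Tuple.monotone_sort lam).comp_antitone fun _ _ => Fin.rev_le_rev.mpr
  simpa [decreasingRearrangement, Fin.rev_rev] using
    (hanti.antivary hε).sum_mul_le_sum_comp_perm_mul
      (σ := π.trans ((Tuple.sort lam).symm.trans Fin.revPerm))

theorem sum_decreasingRearrangement_mul_le_sum_mulVec_mul {d : ℕ} (lam : Fin d → ℝ)
    {ε : Fin d → ℝ} (hε : Monotone ε) {D : Matrix (Fin d) (Fin d) ℝ}
    (hD : D ∈ doublyStochastic ℝ (Fin d)) :
    ∑ k, decreasingRearrangement lam k * ε k ≤ ∑ k, (D *ᵥ lam) k * ε k := by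
  obtain ⟨w, hw_nonneg, hw_sum, rfl⟩ := exists_eq_sum_perm_of_mem_doublyStochastic hD
  calc ∑ k, decreasingRearrangement lam k * ε k
      = ∑ π, w π * ∑ k, decreasingRearrangement lam k * ε k := by
        rw [← Finset.sum_mul, hw_sum, one_mul]
    _ ≤ ∑ π, w π * ∑ k, lam (π k) * ε k :=
      Finset.sum_le_sum fun π _ => mul_le_mul_of_nonneg_left
        (sum_decreasingRearrangement_mul_le_sum_comp_perm_mul lam hε π) (hw_nonneg π)
    _ = ∑ k, ((∑ π, w π • π.permMatrix ℝ) *ᵥ lam) k * ε k := by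
      simp only [Matrix.sum_mulVec, smul_mulVec, permMatrix_mulVec, Finset.sum_apply,
        Pi.smul_apply, Function.comp_apply, smul_eq_mul, Finset.mul_sum, Finset.sum_mul, mul_assoc]
      exact Finset.sum_comm

theorem map_normSq_mem_doublyStochastic {n : Type*} [Fintype n] [DecidableEq n]
    {W : Matrix n n ℂ} (hW : W ∈ unitaryGroup n ℂ) :
    W.map Complex.normSq ∈ doublyStochastic ℝ n := by
  rw [mem_doublyStochastic_iff_sum]
  refine ⟨fun i j => Complex.normSq_nonneg _, fun i => ?_, fun j => ?_⟩
  · have h := congrFun₂ (mem_unitaryGroup_iff.mp hW) i i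
    simp only [mul_apply, star_apply, RCLike.star_def, Complex.mul_conj, one_apply_eq] at h
    exact_mod_cast h
  · have h := congrFun₂ (mem_unitaryGroup_iff'.mp hW) j j
    simp only [mul_apply, star_apply, RCLike.star_def, mul_comm, Complex.mul_conj,
      one_apply_eq] at h
    exact_mod_cast h

theorem re_mul_diagonal_mul_conjTranspose_apply_self {n : Type*} [Fintype n] [DecidableEq n]
    (W : Matrix n n ℂ) (lam : n → ℝ) (k : n) :
    ((W * diagonal (fun j => (lam j : ℂ)) * Wᴴ) k k).re = (W.map Complex.normSq *ᵥ lam) k := by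
  rw [mul_apply, Complex.re_sum]
  simp only [mul_diagonal, conjTranspose_apply, mulVec, dotProduct, map_apply]
  refine Finset.sum_congr rfl fun j _ => ?_
  rw [mul_right_comm, RCLike.star_def, Complex.mul_conj, ← Complex.ofReal_mul, Complex.ofReal_re]

section PassiveEnergy

variable {d : ℕ}

-- `Tr[σ U diag(ε) Uᴴ]`: the energy of `σ` for the Hamiltonian with spectrum `ε` whose
-- eigenvectors are the columns of `U`.
def basisEnergy (ε : Fin d → ℝ) (U σ : Matrix (Fin d) (Fin d) ℂ) : ℝ :=
  ∑ k, ((Uᴴ * σ * U) k k).re * ε k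

theorem basisEnergy_eq_sum_mulVec_mul (ε : Fin d → ℝ) {σ : Matrix (Fin d) (Fin d) ℂ}
    (hσ : σ.IsHermitian) (U : Matrix (Fin d) (Fin d) ℂ) :
    basisEnergy ε U σ =
      ∑ k, ((Uᴴ * (hσ.eigenvectorUnitary : Matrix (Fin d) (Fin d) ℂ)).map Complex.normSq *ᵥ
        hσ.eigenvalues) k * ε k := by
  set W := Uᴴ * (hσ.eigenvectorUnitary : Matrix (Fin d) (Fin d) ℂ)
  have hconj : Uᴴ * σ * U = W * diagonal (fun j => (hσ.eigenvalues j : ℂ)) * Wᴴ := by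
    conv_lhs => rw [hσ.spectral_theorem, Unitary.conjStarAlgAut_apply]
    simp only [W, conjTranspose_mul, conjTranspose_conjTranspose, star_eq_conjTranspose,
      Matrix.mul_assoc]
    rfl
  simp only [basisEnergy, hconj, re_mul_diagonal_mul_conjTranspose_apply_self]

theorem passiveEnergy_le_basisEnergy {ε : Fin d → ℝ} (hε : Monotone ε)
    {σ : Matrix (Fin d) (Fin d) ℂ} (hσ : σ.IsHermitian) {U : Matrix (Fin d) (Fin d) ℂ}
    (hU : U ∈ unitaryGroup (Fin d) ℂ) :
    passiveEnergy ε σ ≤ basisEnergy ε U σ := by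
  have hW : Uᴴ * (hσ.eigenvectorUnitary : Matrix (Fin d) (Fin d) ℂ) ∈ unitaryGroup (Fin d) ℂ :=
    Submonoid.mul_mem _ (Unitary.star_mem hU) hσ.eigenvectorUnitary.2
  rw [passiveEnergy, dif_pos hσ, basisEnergy_eq_sum_mulVec_mul ε hσ]
  exact sum_decreasingRearrangement_mul_le_sum_mulVec_mul _ hε
    (map_normSq_mem_doublyStochastic hW)

theorem exists_basisEnergy_eq_passiveEnergy (ε : Fin d → ℝ) {σ : Matrix (Fin d) (Fin d) ℂ}
    (hσ : σ.IsHermitian) :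
    ∃ U ∈ unitaryGroup (Fin d) ℂ, basisEnergy ε U σ = passiveEnergy ε σ := by
  set V : Matrix (Fin d) (Fin d) ℂ := ↑hσ.eigenvectorUnitary
  set τ : Equiv.Perm (Fin d) := Fin.revPerm.trans (Tuple.sort hσ.eigenvalues)
  have hconj : ∀ A : Matrix (Fin d) (Fin d) ℂ,
      (V.submatrix id τ)ᴴ * A * V.submatrix id τ = (Vᴴ * A * V).submatrix τ τ := by
    intro A
    rw [conjTranspose_submatrix, submatrix_mul _ _ _ _ _ Function.bijective_id,
      submatrix_mul _ _ _ _ _ Function.bijective_id, submatrix_id_id]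
  refine ⟨V.submatrix id τ, ?unitary, ?energy⟩
  case unitary =>
    rw [mem_unitaryGroup_iff', star_eq_conjTranspose, ← Matrix.mul_one (V.submatrix id τ)ᴴ,
      hconj, Matrix.mul_one, ← star_eq_conjTranspose, Unitary.coe_star_mul_self,
      submatrix_one_equiv]
  case energy =>
    have hdiag : Vᴴ * σ * V = diagonal (Complex.ofReal ∘ hσ.eigenvalues) := by
      simpa [V, star_eq_conjTranspose] using hσ.conjStarAlgAut_star_eigenvectorUnitary
    rw [basisEnergy, hconj, hdiag, passiveEnergy, dif_pos hσ]
    simp [τ]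

theorem basisEnergy_sum_smul (ε : Fin d → ℝ) (U : Matrix (Fin d) (Fin d) ℂ) {ι : Type*}
    (s : Finset ι) (c : ι → ℝ) (σ : ι → Matrix (Fin d) (Fin d) ℂ) :
    basisEnergy ε U (∑ a ∈ s, c a • σ a) = ∑ a ∈ s, c a * basisEnergy ε U (σ a) := by
  simp only [basisEnergy, Finset.mul_sum, Matrix.sum_apply, Complex.re_sum, Finset.sum_mul,
    Matrix.mul_smul, Matrix.smul_mul, Matrix.smul_apply, Complex.smul_re, smul_eq_mul, mul_assoc]
  exact Finset.sum_comm

theorem sum_mul_passiveEnergy_le_passiveEnergy_sum_smul {ε : Fin d → ℝ} (hε : Monotone ε)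
    {ι : Type*} (s : Finset ι) {c : ι → ℝ} (hc : ∀ a ∈ s, 0 ≤ c a)
    {σ : ι → Matrix (Fin d) (Fin d) ℂ} (hσ : ∀ a ∈ s, (σ a).IsHermitian) :
    ∑ a ∈ s, c a * passiveEnergy ε (σ a) ≤ passiveEnergy ε (∑ a ∈ s, c a • σ a) := by
  have hsum : (∑ a ∈ s, c a • σ a).IsHermitian :=
    isSelfAdjoint_sum s fun a ha => (hσ a ha).smul (IsSelfAdjoint.all (c a))
  obtain ⟨U, hU, hUσ⟩ := exists_basisEnergy_eq_passiveEnergy ε hsum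
  rw [← hUσ, basisEnergy_sum_smul]
  exact Finset.sum_le_sum fun a ha =>
    mul_le_mul_of_nonneg_left (passiveEnergy_le_basisEnergy hε (hσ a ha) hU) (hc a ha)

end PassiveEnergy

theorem Matrix.PosSemidef.re_trace_smul_inv_smul {n : Type*} [Fintype n]
    {S : Matrix n n ℂ} (hS : S.PosSemidef) :
    S.trace.re • (S.trace.re⁻¹ • S) = S := by
  rcases eq_or_ne S.trace.re 0 with h | h
  · -- a positive semidefinite matrix of trace zero vanishes, so the junk `0⁻¹ = 0` is harmless
    have htrace : S.trace = 0 := Complex.ext h (Complex.nonneg_iff.mp hS.trace_nonneg).2.symm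
    simp [hS.trace_eq_zero_iff.mp htrace]
  · rw [smul_smul, mul_inv_cancel₀ h, one_smul]

section PartialTrace

variable {d m : ℕ}

theorem ptrA_eq_sum_submatrix (X : Matrix (Fin d × Fin m) (Fin d × Fin m) ℂ) :
    ptrA X = ∑ a, X.submatrix (·, a) (·, a) := by
  ext i j
  simp [ptrA, Matrix.sum_apply]

theorem posSemidef_ptrA {X : Matrix (Fin d × Fin m) (Fin d × Fin m) ℂ} (hX : X.PosSemidef) :
    (ptrA X).PosSemidef := by
  rw [ptrA_eq_sum_submatrix]
  exact posSemidef_sum _ fun a _ => hX.submatrix _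

theorem ptrA_sum {ι : Type*} (s : Finset ι)
    (X : ι → Matrix (Fin d × Fin m) (Fin d × Fin m) ℂ) :
    ptrA (∑ a ∈ s, X a) = ∑ a ∈ s, ptrA (X a) := by
  ext i j
  simp only [ptrA, Matrix.sum_apply]
  exact Finset.sum_comm

theorem trace_ptrA (X : Matrix (Fin d × Fin m) (Fin d × Fin m) ℂ) :
    (ptrA X).trace = X.trace := by
  simp [trace, ptrA, Fintype.sum_prod_type]

theorem ptrA_mul_one_kronecker (X : Matrix (Fin d × Fin m) (Fin d × Fin m) ℂ)
    (Q : Matrix (Fin m) (Fin m) ℂ) :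
    ptrA (X * ((1 : Matrix (Fin d) (Fin d) ℂ) ⊗ₖ Q)) =
      ptrA (((1 : Matrix (Fin d) (Fin d) ℂ) ⊗ₖ Q) * X) := by
  ext i j
  have hright : ∀ a b, (X * ((1 : Matrix (Fin d) (Fin d) ℂ) ⊗ₖ Q)) (i, a) (j, b) =
      (X.submatrix (Prod.mk i) (Prod.mk j) * Q) a b := by
    intro a b
    simp [mul_apply, Fintype.sum_prod_type, one_apply]
  have hleft : ∀ a b, (((1 : Matrix (Fin d) (Fin d) ℂ) ⊗ₖ Q) * X) (i, a) (j, b) =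
      (Q * X.submatrix (Prod.mk i) (Prod.mk j)) a b := by
    intro a b
    simp [mul_apply, Fintype.sum_prod_type, one_apply]
  simpa only [ptrA, hright, hleft, trace, diag] using
    trace_mul_comm (X.submatrix (Prod.mk i) (Prod.mk j)) Q

theorem one_kronecker_sum {ι : Type*} (s : Finset ι) (Q : ι → Matrix (Fin m) (Fin m) ℂ) :
    (1 : Matrix (Fin d) (Fin d) ℂ) ⊗ₖ (∑ a ∈ s, Q a) =
      ∑ a ∈ s, (1 : Matrix (Fin d) (Fin d) ℂ) ⊗ₖ Q a := by
  ext ⟨i, x⟩ ⟨j, y⟩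
  simp [Matrix.sum_apply, Finset.mul_sum]

end PartialTrace

section Measurement

variable {d m : ℕ} {ρ : Matrix (Fin d × Fin m) (Fin d × Fin m) ℂ} {P : Matrix (Fin m) (Fin m) ℂ}

theorem posSemidef_ptrA_conj_one_kronecker (hρ : ρ.PosSemidef) (hPh : P.IsHermitian) :
    (ptrA (((1 : Matrix (Fin d) (Fin d) ℂ) ⊗ₖ P) * ρ *
      ((1 : Matrix (Fin d) (Fin d) ℂ) ⊗ₖ P))).PosSemidef := by
  have h := hρ.mul_mul_conjTranspose_same ((1 : Matrix (Fin d) (Fin d) ℂ) ⊗ₖ P)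
  rw [conjTranspose_kronecker, conjTranspose_one, hPh.eq] at h
  exact posSemidef_ptrA h

theorem ptrA_conj_one_kronecker (hP : IsIdempotentElem P) :
    ptrA (((1 : Matrix (Fin d) (Fin d) ℂ) ⊗ₖ P) * ρ * ((1 : Matrix (Fin d) (Fin d) ℂ) ⊗ₖ P)) =
      ptrA (((1 : Matrix (Fin d) (Fin d) ℂ) ⊗ₖ P) * ρ) := by
  rw [ptrA_mul_one_kronecker, ← Matrix.mul_assoc, ← mul_kronecker_mul, Matrix.one_mul, hP.eq]

theorem outcomeProb_eq_re_trace (hP : IsIdempotentElem P) :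
    outcomeProb ρ P = (ptrA (((1 : Matrix (Fin d) (Fin d) ℂ) ⊗ₖ P) * ρ *
      ((1 : Matrix (Fin d) (Fin d) ℂ) ⊗ₖ P))).trace.re := by
  rw [outcomeProb, trace_ptrA, trace_mul_cycle, ← mul_kronecker_mul, Matrix.one_mul, hP.eq]

theorem outcomeProb_nonneg (hρ : ρ.PosSemidef) (hPh : P.IsHermitian) (hP : IsIdempotentElem P) :
    0 ≤ outcomeProb ρ P := by
  rw [outcomeProb_eq_re_trace hP]
  exact (Complex.nonneg_iff.mp (posSemidef_ptrA_conj_one_kronecker hρ hPh).trace_nonneg).1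

theorem condState_isHermitian (hρ : ρ.PosSemidef) (hPh : P.IsHermitian) :
    (condState ρ P).IsHermitian :=
  (posSemidef_ptrA_conj_one_kronecker hρ hPh).1.smul (IsSelfAdjoint.all _)

theorem outcomeProb_smul_condState (hρ : ρ.PosSemidef) (hPh : P.IsHermitian)
    (hP : IsIdempotentElem P) :
    outcomeProb ρ P • condState ρ P = ptrA (((1 : Matrix (Fin d) (Fin d) ℂ) ⊗ₖ P) * ρ) := by
  rw [condState, outcomeProb_eq_re_trace hP,
    (posSemidef_ptrA_conj_one_kronecker hρ hPh).re_trace_smul_inv_smul, ptrA_conj_one_kronecker hP]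

theorem sum_outcomeProb_smul_condState {n : ℕ} (hρ : ρ.PosSemidef)
    {P : Fin n → Matrix (Fin m) (Fin m) ℂ} (hPh : ∀ a, (P a).IsHermitian)
    (hP : ∀ a, IsIdempotentElem (P a)) (hPc : ∑ a, P a = 1) :
    ∑ a, outcomeProb ρ (P a) • condState ρ (P a) = ptrA ρ := by
  simp only [outcomeProb_smul_condState hρ (hPh _) (hP _)]
  rw [← ptrA_sum, ← Finset.sum_mul, ← one_kronecker_sum, hPc, one_kronecker_one, Matrix.one_mul]

end Measurement

theorem daemonic_ergotropy_ge_ergotropy_general {d m n : ℕ}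
    (ε : Fin d → ℝ) (hε : Monotone ε)
    (H : Matrix (Fin d) (Fin d) ℂ)
    (ρ : Matrix (Fin d × Fin m) (Fin d × Fin m) ℂ)
    (hρ : ρ.PosSemidef)
    (P : Fin n → Matrix (Fin m) (Fin m) ℂ)
    (hPh : ∀ a, (P a).IsHermitian)
    (hPo : ∀ a b, P a * P b = if a = b then P a else 0)
    (hPc : ∑ a, P a = 1) :
    ((ptrA ρ) * H).trace.re - passiveEnergy ε (ptrA ρ) ≤
      ((ptrA ρ) * H).trace.re -
        ∑ a, outcomeProb ρ (P a) * passiveEnergy ε (condState ρ (P a)) := by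
  have hP : ∀ a, IsIdempotentElem (P a) := fun a => show P a * P a = P a by simpa using hPo a a
  suffices ∑ a, outcomeProb ρ (P a) * passiveEnergy ε (condState ρ (P a)) ≤
      passiveEnergy ε (ptrA ρ) by linarith
  calc ∑ a, outcomeProb ρ (P a) * passiveEnergy ε (condState ρ (P a))
      ≤ passiveEnergy ε (∑ a, outcomeProb ρ (P a) • condState ρ (P a)) :=
        sum_mul_passiveEnergy_le_passiveEnergy_sum_smul hε _
          (fun a _ => outcomeProb_nonneg hρ (hPh a) (hP a))
          (fun a _ => condState_isHermitian hρ (hPh a))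
    _ = passiveEnergy ε (ptrA ρ) := by rw [sum_outcomeProb_smul_condState hρ hPh hP hPc]

/-- Lemma 1: the daemonic ergotropy exceeds the ergotropy:
W_{Πₐ} = Tr[ρ_S H] − ∑ₐ pₐ ∑ₖ rᵃₖ εₖ ≥ W = Tr[ρ_S H] − ∑ₖ rₖ εₖ, for any
complete projective measurement on the ancilla. -/
theorem daemonic_ergotropy_ge_ergotropy {d m n : ℕ}
    (ε : Fin d → ℝ) (hε : Monotone ε)
    (e : Fin d → Fin d → ℂ)
    (he : ∀ j k, star (e j) ⬝ᵥ e k = if j = k then (1 : ℂ) else 0)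
    (H : Matrix (Fin d) (Fin d) ℂ)
    (hH : H = ∑ k, (ε k : ℂ) • vecMulVec (e k) (star (e k)))
    (ρ : Matrix (Fin d × Fin m) (Fin d × Fin m) ℂ)
    (hρ : ρ.PosSemidef) (htr : ρ.trace = 1)
    (P : Fin n → Matrix (Fin m) (Fin m) ℂ)
    (hPh : ∀ a, (P a).IsHermitian)
    (hPo : ∀ a b, P a * P b = if a = b then P a else 0)
    (hPc : ∑ a, P a = 1) :
    ((ptrA ρ) * H).trace.re - passiveEnergy ε (ptrA ρ) ≤
      ((ptrA ρ) * H).trace.re -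
        ∑ a, outcomeProb ρ (P a) * passiveEnergy ε (condState ρ (P a)) :=
  daemonic_ergotropy_ge_ergotropy_general ε hε H ρ hρ P hPh hPo hPc
end

section
/- Per-outcome relative ergotropy: for each measurement outcome a with p_a > 0, the quantity Σ_{k,j} r^a_j ε_k (|⟨r_k|r^a_j⟩|² − δ_{kj}) is nonnegative, being the ergotropy of ρ_{S|a} relative to the Hamiltonian Σ_k ε_k |r_k⟩⟨r_k|, and it is zero if and only if ρ_{S|a} = Σ_k r^a_k |r_k⟩⟨r_k| (assuming ε_1 < ε_2 < ... < ε_d). -/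
open Matrix Kronecker BigOperators ComplexOrder

/-!
Let `M = Vᴴ W` be the unitary matrix relating the two eigenbases and `B = (|Mₖⱼ|²)`, which is
doubly stochastic. The quantity is `∑ₖ εₖ ((B r)ₖ - rₖ)`. As `r` is decreasing, each prefix sum of
`B r` is at most the corresponding prefix sum of `r`, and both totals agree; summation by parts
against the increasing `ε` gives nonnegativity, and for strictly increasing `ε` the sum vanishes
only if `B r = r`. In that case `∑ Bₖⱼ (rₖ - rⱼ)² = 0`, so `rₖ = rⱼ` whenever `Mₖⱼ ≠ 0`: `M`
commutes with `diag r`, which says exactly that `σ = V diag(r) Vᴴ`.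
-/

open Finset

section DoublyStochastic

variable {n : Type*} [Fintype n] [DecidableEq n]

lemma sum_mulVec_le_sum_of_mem_doublyStochastic {B : Matrix n n ℝ}
    (hB : B ∈ doublyStochastic ℝ n) {r : n → ℝ} {A : Finset n} {t : ℝ}
    (hA : ∀ i ∈ A, t ≤ r i) (hAc : ∀ i ∉ A, r i ≤ t) :
    ∑ i ∈ A, (B *ᵥ r) i ≤ ∑ i ∈ A, r i := by
  set c : n → ℝ := fun j => ∑ i ∈ A, B i j
  have hc0 (j : n) : 0 ≤ c j := sum_nonneg fun i _ => nonneg_of_mem_doublyStochastic hB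
  have hc1 (j : n) : c j ≤ 1 := by
    rw [← sum_col_of_mem_doublyStochastic hB j]
    exact sum_le_sum_of_subset_of_nonneg (subset_univ A)
      fun i _ _ => nonneg_of_mem_doublyStochastic hB
  have hcard : ∑ j, c j = #A := by
    rw [sum_comm, sum_congr rfl fun i _ => sum_row_of_mem_doublyStochastic hB i]
    simp
  calc ∑ i ∈ A, (B *ᵥ r) i = ∑ j, c j * r j := by
        simp only [mulVec, dotProduct, c, sum_mul]
        exact sum_comm
    _ = ∑ j, c j * t + (∑ j ∈ A, c j * (r j - t) + ∑ j ∈ Aᶜ, c j * (r j - t)) := by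
        rw [sum_add_sum_compl, ← sum_add_distrib]
        exact sum_congr rfl fun j _ => by ring
    _ ≤ ∑ j ∈ A, t + (∑ j ∈ A, (r j - t) + 0) := by
        rw [← sum_mul, hcard, sum_const, nsmul_eq_mul]
        refine add_le_add_right (add_le_add ?_ ?_) _
        · exact sum_le_sum fun j hj =>
            mul_le_of_le_one_left (sub_nonneg.2 (hA j hj)) (hc1 j)
        · exact sum_nonpos fun j hj =>
            mul_nonpos_of_nonneg_of_nonpos (hc0 j) (sub_nonpos.2 (hAc j (mem_compl.1 hj)))
    _ = ∑ i ∈ A, r i := by rw [add_zero, ← sum_add_distrib]; simp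

lemma eq_of_mulVec_eq_self_of_mem_doublyStochastic {B : Matrix n n ℝ}
    (hB : B ∈ doublyStochastic ℝ n) {r : n → ℝ} (hr : B *ᵥ r = r) {i j : n}
    (hij : B i j ≠ 0) : r i = r j := by
  have hB0 (i j : n) : 0 ≤ B i j := nonneg_of_mem_doublyStochastic hB
  have hrows : ∑ i, ∑ j, B i j * r i ^ 2 = ∑ i, r i ^ 2 := by
    simp only [← sum_mul, sum_row_of_mem_doublyStochastic hB, one_mul]
  have hcols : ∑ i, ∑ j, B i j * r j ^ 2 = ∑ j, r j ^ 2 := by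
    rw [sum_comm]
    simp only [← sum_mul, sum_col_of_mem_doublyStochastic hB, one_mul]
  have hcross : ∑ i, ∑ j, B i j * (r i * r j) = ∑ i, r i ^ 2 := by
    refine sum_congr rfl fun i _ => ?_
    have hi : ∑ j, B i j * r j = r i := congrFun hr i
    rw [sq, ← hi, mul_sum]
    exact sum_congr rfl fun j _ => by ring
  have hsum : ∑ i, ∑ j, B i j * (r i - r j) ^ 2 = 0 := by
    calc ∑ i, ∑ j, B i j * (r i - r j) ^ 2
        = ∑ i, ∑ j, B i j * r i ^ 2 - 2 * ∑ i, ∑ j, B i j * (r i * r j)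
          + ∑ i, ∑ j, B i j * r j ^ 2 := by
          simp only [mul_sum, ← sum_sub_distrib, ← sum_add_distrib]
          exact sum_congr rfl fun i _ => sum_congr rfl fun j _ => by ring
      _ = 0 := by rw [hrows, hcols, hcross]; ring
  have hrow := (sum_eq_zero_iff_of_nonneg fun i _ => sum_nonneg fun j _ =>
    mul_nonneg (hB0 i j) (sq_nonneg (r i - r j))).1 hsum i (mem_univ i)
  have hentry := (sum_eq_zero_iff_of_nonneg fun j _ =>
    mul_nonneg (hB0 i j) (sq_nonneg (r i - r j))).1 hrow j (mem_univ j)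
  simpa [hij, sub_eq_zero] using hentry

lemma sum_Iic_mulVec_le_sum_Iic_of_antitone [LinearOrder n] [LocallyFiniteOrderBot n]
    {B : Matrix n n ℝ} (hB : B ∈ doublyStochastic ℝ n) {r : n → ℝ} (hr : Antitone r) (m : n) :
    ∑ i ∈ Iic m, (B *ᵥ r) i ≤ ∑ i ∈ Iic m, r i :=
  sum_mulVec_le_sum_of_mem_doublyStochastic hB (t := r m) (fun _ hi => hr (mem_Iic.1 hi))
    fun _ hi => hr (not_le.1 (mt mem_Iic.2 hi)).le

end DoublyStochastic

section SummationByParts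

variable {f g : ℕ → ℝ} {n : ℕ}

lemma sum_range_mul_eq_neg_sum_of_sum_range_eq_zero (hg : ∑ i ∈ range n, g i = 0) :
    ∑ i ∈ range n, f i * g i =
      -∑ i ∈ range (n - 1), (f (i + 1) - f i) * ∑ k ∈ range (i + 1), g k := by
  simpa [hg] using sum_range_by_parts f g n

lemma sum_range_mul_nonneg_of_sum_range_nonpos (hf : ∀ i, i + 1 < n → f i ≤ f (i + 1))
    (hg : ∀ i < n, ∑ k ∈ range (i + 1), g k ≤ 0) (hg0 : ∑ i ∈ range n, g i = 0) :
    0 ≤ ∑ i ∈ range n, f i * g i := by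
  rw [sum_range_mul_eq_neg_sum_of_sum_range_eq_zero hg0, neg_nonneg]
  refine sum_nonpos fun i hi => ?_
  have hi : i + 1 < n := by rw [mem_range] at hi; omega
  exact mul_nonpos_of_nonneg_of_nonpos (sub_nonneg.2 (hf i hi)) (hg i (by omega))

lemma eq_zero_of_sum_range_mul_eq_zero (hf : ∀ i, i + 1 < n → f i < f (i + 1))
    (hg : ∀ i < n, ∑ k ∈ range (i + 1), g k ≤ 0) (hg0 : ∑ i ∈ range n, g i = 0)
    (h : ∑ i ∈ range n, f i * g i = 0) : ∀ i < n, g i = 0 := by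
  rw [sum_range_mul_eq_neg_sum_of_sum_range_eq_zero hg0, neg_eq_zero] at h
  have hterm (i : ℕ) (hi : i + 1 < n) :
      (f (i + 1) - f i) * ∑ k ∈ range (i + 1), g k ≤ 0 :=
    mul_nonpos_of_nonneg_of_nonpos (sub_nonneg.2 (hf i hi).le) (hg i (by omega))
  have hpartial : ∀ i ≤ n, ∑ k ∈ range i, g k = 0
    | 0, _ => sum_range_zero g
    | j + 1, hj => by
      rcases hj.lt_or_eq with hj | rfl
      · have hzero := (sum_eq_zero_iff_of_nonpos fun k hk =>
          hterm k (by rw [mem_range] at hk; omega)).1 h j (mem_range.2 (by omega))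
        exact (mul_eq_zero.1 hzero).resolve_left (sub_ne_zero.2 (hf j hj).ne')
      · exact hg0
  intro i hi
  have := sum_range_succ g i
  rw [hpartial (i + 1) hi, hpartial i hi.le] at this
  linarith

end SummationByParts

section Fin

variable {d : ℕ} {ε y : Fin d → ℝ}

lemma Fin.extend_val_apply_mk {α : Type*} [Zero α] (x : Fin d → α) {i : ℕ} (hi : i < d) :
    Function.extend Fin.val x 0 i = x ⟨i, hi⟩ :=
  Fin.val_injective.extend_apply x 0 ⟨i, hi⟩

lemma Fin.sum_Iic_eq_sum_range_extend {M : Type*} [AddCommMonoid M] (y : Fin d → M)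
    (m : Fin d) :
    ∑ k ∈ Iic m, y k = ∑ i ∈ range (m + 1), Function.extend Fin.val y 0 i := by
  rw [Nat.range_succ_eq_Iic, ← Fin.map_valEmbedding_Iic, sum_map]
  exact sum_congr rfl fun k _ => (Fin.val_injective.extend_apply y 0 k).symm

lemma Fin.sum_mul_eq_sum_range_extend {R : Type*} [NonUnitalNonAssocSemiring R]
    (ε y : Fin d → R) :
    ∑ k, ε k * y k =
      ∑ i ∈ range d, Function.extend Fin.val ε 0 i * Function.extend Fin.val y 0 i := by
  rw [← Fin.sum_univ_eq_sum_range]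
  simp only [Fin.val_injective.extend_apply]

lemma Fin.sum_eq_sum_range_extend {M : Type*} [AddCommMonoid M] (y : Fin d → M) :
    ∑ k, y k = ∑ i ∈ range d, Function.extend Fin.val y 0 i := by
  rw [← Fin.sum_univ_eq_sum_range]
  simp only [Fin.val_injective.extend_apply]

lemma sum_mul_nonneg_of_sum_Iic_nonpos (hε : Monotone ε) (hy : ∀ m, ∑ k ∈ Iic m, y k ≤ 0)
    (hy0 : ∑ k, y k = 0) : 0 ≤ ∑ k, ε k * y k := by
  rw [Fin.sum_mul_eq_sum_range_extend]
  refine sum_range_mul_nonneg_of_sum_range_nonpos (fun i hi => ?_) (fun i hi => ?_) ?_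
  · rw [Fin.extend_val_apply_mk ε (by omega), Fin.extend_val_apply_mk ε hi]
    exact hε (Fin.mk_le_mk.2 (by omega))
  · exact Fin.sum_Iic_eq_sum_range_extend y ⟨i, hi⟩ ▸ hy ⟨i, hi⟩
  · rwa [← Fin.sum_eq_sum_range_extend]

lemma eq_zero_of_sum_mul_eq_zero_of_sum_Iic_nonpos (hε : StrictMono ε)
    (hy : ∀ m, ∑ k ∈ Iic m, y k ≤ 0) (hy0 : ∑ k, y k = 0) (h : ∑ k, ε k * y k = 0) :
    y = 0 := by
  rw [Fin.sum_mul_eq_sum_range_extend] at h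
  have hzero := eq_zero_of_sum_range_mul_eq_zero (fun i hi => ?_) (fun i hi => ?_) ?_ h
  · ext ⟨i, hi⟩
    rw [← Fin.extend_val_apply_mk y hi]
    exact hzero i hi
  · rw [Fin.extend_val_apply_mk ε (by omega), Fin.extend_val_apply_mk ε hi]
    exact hε (Fin.mk_lt_mk.2 (by omega))
  · exact Fin.sum_Iic_eq_sum_range_extend y ⟨i, hi⟩ ▸ hy ⟨i, hi⟩
  · rwa [← Fin.sum_eq_sum_range_extend]

end Fin

section Unitary

variable {n : Type*} [Fintype n] [DecidableEq n]

lemma transpose_of_mem_unitaryGroup {α : Type*} [CommRing α] [StarRing α] {v : n → n → α}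
    (hv : ∀ j k, star (v j) ⬝ᵥ v k = if j = k then 1 else 0) :
    (of v)ᵀ ∈ unitaryGroup n α := by
  rw [mem_unitaryGroup_iff']
  ext j k
  simpa [mul_apply, dotProduct, one_apply] using hv j k

lemma sum_smul_vecMulVec_eq_mul_diagonal_mul_conjTranspose {α : Type*} [CommSemiring α]
    [StarRing α] (r : n → α) (v : n → n → α) :
    ∑ k, r k • vecMulVec (v k) (star (v k)) = (of v)ᵀ * diagonal r * (of v)ᵀᴴ := by
  ext i j
  rw [mul_apply, Matrix.sum_apply]
  simp only [Matrix.smul_apply, vecMulVec_apply, mul_diagonal, transpose_apply,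
    conjTranspose_apply, of_apply, Pi.star_apply, smul_eq_mul]
  exact sum_congr rfl fun k _ => by ring

lemma eq_mul_mul_conjTranspose_iff {α : Type*} [CommRing α] [StarRing α] {U : Matrix n n α}
    (hU : U ∈ unitaryGroup n α) {X Y : Matrix n n α} : X = U * Y * Uᴴ ↔ Uᴴ * X * U = Y := by
  have h₁ : Uᴴ * U = 1 := mem_unitaryGroup_iff'.1 hU
  have h₂ : U * Uᴴ = 1 := mem_unitaryGroup_iff.1 hU
  constructor
  · rintro rfl
    calc Uᴴ * (U * Y * Uᴴ) * U = Uᴴ * U * Y * (Uᴴ * U) := by simp only [Matrix.mul_assoc]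
      _ = Y := by rw [h₁, Matrix.one_mul, Matrix.mul_one]
  · rintro rfl
    calc X = U * Uᴴ * X * (U * Uᴴ) := by rw [h₂, Matrix.one_mul, Matrix.mul_one]
      _ = U * (Uᴴ * X * U) * Uᴴ := by simp only [Matrix.mul_assoc]

variable {𝕜 : Type*} [RCLike 𝕜]

lemma norm_sq_mem_doublyStochastic {U : Matrix n n 𝕜} (hU : U ∈ unitaryGroup n 𝕜) :
    of (fun i j => ‖U i j‖ ^ 2) ∈ doublyStochastic ℝ n := by
  refine mem_doublyStochastic_iff_sum.2 ⟨fun i j => sq_nonneg _, fun i => ?_, fun j => ?_⟩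
  · have h := congr_fun₂ (mem_unitaryGroup_iff.1 hU) i i
    simp only [mul_apply, star_apply, RCLike.star_def, RCLike.mul_conj, one_apply_eq] at h
    exact_mod_cast h
  · have h := congr_fun₂ (mem_unitaryGroup_iff'.1 hU) j j
    simp only [mul_apply, star_apply, RCLike.star_def, RCLike.conj_mul, one_apply_eq] at h
    exact_mod_cast h

lemma mul_diagonal_mul_conjTranspose_eq_diagonal_iff {U : Matrix n n 𝕜}
    (hU : U ∈ unitaryGroup n 𝕜) (r : n → ℝ) :
    U * diagonal (fun i => (r i : 𝕜)) * Uᴴ = diagonal (fun i => (r i : 𝕜)) ↔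
      of (fun i j => ‖U i j‖ ^ 2) *ᵥ r = r := by
  have hdiag (i : n) : (U * diagonal (fun i => (r i : 𝕜)) * Uᴴ) i i =
      ((of (fun i j => ‖U i j‖ ^ 2) *ᵥ r) i : ℝ) := by
    rw [mul_apply]
    simp only [mul_diagonal, conjTranspose_apply, RCLike.star_def, mulVec, dotProduct, of_apply]
    push_cast
    exact sum_congr rfl fun j _ => by rw [← RCLike.mul_conj]; ring
  constructor
  · intro h
    ext i
    have hi := hdiag i
    rw [h, diagonal_apply_eq] at hi
    exact_mod_cast hi.symm
  · intro h
    have hcomm : U * diagonal (fun i => (r i : 𝕜)) = diagonal (fun i => (r i : 𝕜)) * U := by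
      ext i j
      rw [mul_diagonal, diagonal_mul]
      by_cases hij : U i j = 0
      · simp [hij]
      rw [eq_of_mulVec_eq_self_of_mem_doublyStochastic (norm_sq_mem_doublyStochastic hU) h
        (i := i) (j := j) (by simpa using hij), mul_comm]
    have hU' : U * Uᴴ = 1 := mem_unitaryGroup_iff.1 hU
    rw [hcomm, Matrix.mul_assoc, hU', Matrix.mul_one]

end Unitary

lemma sum_sum_mul_mul_sub_ite_eq_sum_mul_mulVec_sub {n : Type*} [Fintype n] [DecidableEq n]
    (B : Matrix n n ℝ) (r ε : n → ℝ) :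
    ∑ k, ∑ j, r j * ε k * (B k j - if k = j then 1 else 0) = ∑ k, ε k * (B *ᵥ r - r) k := by
  refine sum_congr rfl fun k _ => ?_
  simp only [Pi.sub_apply, mul_sub, sum_sub_distrib, mul_ite, mul_one, mul_zero, sum_ite_eq,
    mem_univ, if_true, mulVec, dotProduct, mul_sum]
  congr 1
  · exact sum_congr rfl fun j _ => by ring
  · ring

theorem per_outcome_relative_ergotropy_general {d : ℕ}
    (ε : Fin d → ℝ) (hε : StrictMono ε)
    (v : Fin d → Fin d → ℂ)
    (hv : ∀ j k, star (v j) ⬝ᵥ v k = if j = k then (1 : ℂ) else 0)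
    (ra : Fin d → ℝ) (hra : Antitone ra)
    (w : Fin d → Fin d → ℂ)
    (hw : ∀ j k, star (w j) ⬝ᵥ w k = if j = k then (1 : ℂ) else 0)
    (σ : Matrix (Fin d) (Fin d) ℂ)
    (hσ : σ = ∑ k, (ra k : ℂ) • vecMulVec (w k) (star (w k))) :
    0 ≤ (∑ k, ∑ j, ra j * ε k *
        (‖star (v k) ⬝ᵥ w j‖ ^ 2 - if k = j then 1 else 0)) ∧
    ((∑ k, ∑ j, ra j * ε k *
        (‖star (v k) ⬝ᵥ w j‖ ^ 2 - if k = j then 1 else 0)) = 0 ↔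
      σ = ∑ k, (ra k : ℂ) • vecMulVec (v k) (star (v k))) := by
  set V := (of v)ᵀ
  set W := (of w)ᵀ
  set M := Vᴴ * W
  set B : Matrix (Fin d) (Fin d) ℝ := of fun k j => ‖M k j‖ ^ 2
  have hV : V ∈ unitaryGroup (Fin d) ℂ := transpose_of_mem_unitaryGroup hv
  have hM : M ∈ unitaryGroup (Fin d) ℂ :=
    mul_mem (Unitary.star_mem hV) (transpose_of_mem_unitaryGroup hw)
  have hB : B ∈ doublyStochastic ℝ (Fin d) := norm_sq_mem_doublyStochastic hM
  have hBvw (k j : Fin d) : B k j = ‖star (v k) ⬝ᵥ w j‖ ^ 2 := by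
    simp [B, M, V, W, mul_apply, dotProduct]
  have hprefix (m : Fin d) : ∑ k ∈ Iic m, (B *ᵥ ra - ra) k ≤ 0 := by
    simpa [sum_sub_distrib] using sum_Iic_mulVec_le_sum_Iic_of_antitone hB hra m
  have htotal : ∑ k, (B *ᵥ ra - ra) k = 0 := by
    simp [sum_sub_distrib, sum_mulVec_of_mem_doublyStochastic hB]
  have hσM : σ = ∑ k, (ra k : ℂ) • vecMulVec (v k) (star (v k)) ↔
      M * diagonal (fun k => (ra k : ℂ)) * Mᴴ = diagonal (fun k => (ra k : ℂ)) := by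
    rw [sum_smul_vecMulVec_eq_mul_diagonal_mul_conjTranspose, eq_mul_mul_conjTranspose_iff hV,
      hσ, sum_smul_vecMulVec_eq_mul_diagonal_mul_conjTranspose]
    simp only [M, W, conjTranspose_mul, conjTranspose_conjTranspose, Matrix.mul_assoc]
  simp_rw [← hBvw]
  rw [sum_sum_mul_mul_sub_ite_eq_sum_mul_mulVec_sub,
    hσM.trans (mul_diagonal_mul_conjTranspose_eq_diagonal_iff hM ra)]
  refine ⟨sum_mul_nonneg_of_sum_Iic_nonpos hε.monotone hprefix htotal, fun h => ?_, fun h => ?_⟩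
  · exact sub_eq_zero.1 (eq_zero_of_sum_mul_eq_zero_of_sum_Iic_nonpos hε hprefix htotal h)
  · simp [show B *ᵥ ra = ra from h]

/-- per-outcome relative ergotropy
∑_{k,j} rᵃⱼ εₖ (|⟨rₖ|rᵃⱼ⟩|² − δₖⱼ) is nonnegative, and (for strictly
increasing ε) it vanishes iff the conditional state is diagonal with
decreasing populations in the basis {|rₖ⟩}: σ = ∑ₖ rᵃₖ |rₖ⟩⟨rₖ|. -/
theorem per_outcome_relative_ergotropy {d : ℕ}
    (ε : Fin d → ℝ) (hε : StrictMono ε)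
    (v : Fin d → Fin d → ℂ)
    (hv : ∀ j k, star (v j) ⬝ᵥ v k = if j = k then (1 : ℂ) else 0)
    (ra : Fin d → ℝ) (hra : Antitone ra)
    (hra0 : ∀ k, 0 ≤ ra k) (hra1 : ∑ k, ra k = 1)
    (w : Fin d → Fin d → ℂ)
    (hw : ∀ j k, star (w j) ⬝ᵥ w k = if j = k then (1 : ℂ) else 0)
    (σ : Matrix (Fin d) (Fin d) ℂ)
    (hσ : σ = ∑ k, (ra k : ℂ) • vecMulVec (w k) (star (w k))) :
    0 ≤ (∑ k, ∑ j, ra j * ε k *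
        (‖star (v k) ⬝ᵥ w j‖ ^ 2 - if k = j then 1 else 0)) ∧
    ((∑ k, ∑ j, ra j * ε k *
        (‖star (v k) ⬝ᵥ w j‖ ^ 2 - if k = j then 1 else 0)) = 0 ↔
      σ = ∑ k, (ra k : ℂ) • vecMulVec (v k) (star (v k))) :=
  per_outcome_relative_ergotropy_general ε hε v hv ra hra w hw σ hσ
end
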